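/- For S = {2, 3}, the greedy first move from heap 7 is strictly suboptimal in PSPE play under every tie-breaking setting X: o¹_X(7) ≥ 4 > 3 = 3 + o²_{d(X)}(4); that is, the sacrificing move 2 strictly outperforms the greedy move 3. -/

import Mathlib

/-!
Against `{2, 3}` every heap up to 7 has a unique best first move, so the tie-breaking setting
never matters and the outcome pairs are computed by hand: `(0, 0)` for `h < 2`, then
`(2, 0), (3, 0), (3, 0), (3, 2)` for `h = 2, …, 5`. At heap 7, taking 3 leaves heap 4, where the
opponent takes 3 and the last heap 1 is dead, for a total of 3; taking 2 leaves heap 5, where the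
opponent's best reply 3 leaves heap 2 for us, for a total of 4.
-/

inductive TB : Type
  | FvF | FvA | AvF | AvA
deriving DecidableEq

def TB.dual : TB → TB
  | .FvF => .FvF
  | .FvA => .AvF
  | .AvF => .FvA
  | .AvA => .AvA

/-- `true` iff the current mover is friendly (first letter F). -/
def TB.friendly : TB → Bool
  | .FvF => true
  | .FvA => true
  | .AvF => false
  | .AvA => false

/-- PSPE outcome pair `(o¹_X h, o²_X h)` for subtraction set `S`. -/
def outc (S : Finset ℕ) (h : ℕ) (X : TB) : ℕ × ℕ :=
  let M := S.filter fun s => 0 < s ∧ s ≤ h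
  if hM : M.Nonempty then
    have hA : M.attach.Nonempty := (Finset.attach_nonempty_iff).mpr hM
    let f : {s // s ∈ M} → ℕ := fun s =>
      have hs : h - s.1 < h := by
        have h1 := (Finset.mem_filter.mp s.2).2
        omega
      s.1 + (outc S (h - s.1) X.dual).2
    let o1 := M.attach.sup f
    let Mstar := M.attach.filter fun s => f s = o1
    have hMs : Mstar.Nonempty := by
      obtain ⟨b, hb, hbe⟩ := Finset.exists_mem_eq_sup M.attach hA f
      exact ⟨b, Finset.mem_filter.mpr ⟨hb, hbe.symm⟩⟩
    let g : {s // s ∈ M} → ℕ := fun s =>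
      have hs : h - s.1 < h := by
        have h1 := (Finset.mem_filter.mp s.2).2
        omega
      (outc S (h - s.1) X.dual).1
    if X.friendly then (o1, Mstar.sup g) else (o1, Mstar.inf' hMs g)
  else (0, 0)
termination_by h

/-- First player's PSPE utility. -/
def o1 (S : Finset ℕ) (X : TB) (h : ℕ) : ℕ := (outc S h X).1

/-- Second player's PSPE utility. -/
def o2 (S : Finset ℕ) (X : TB) (h : ℕ) : ℕ := (outc S h X).2

theorem outc_eq_of_best_move {S : Finset ℕ} {h s : ℕ} {X : TB} (hsS : s ∈ S) (hs : 0 < s)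
    (hsh : s ≤ h)
    (hbest : ∀ t ∈ S, 0 < t → t ≤ h → t ≠ s →
      t + o2 S X.dual (h - t) < s + o2 S X.dual (h - s)) :
    outc S h X = (s + o2 S X.dual (h - s), o1 S X.dual (h - s)) := by
  have hsM : s ∈ S.filter fun t => 0 < t ∧ t ≤ h := Finset.mem_filter.mpr ⟨hsS, hs, hsh⟩
  rw [outc, dif_pos ⟨s, hsM⟩]
  extract_lets hA f o Mstar hMs g
  have hlt : ∀ t, t ≠ ⟨s, hsM⟩ → f t < f ⟨s, hsM⟩ := by
    rintro ⟨t, htM⟩ hts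
    obtain ⟨htS, ht, hth⟩ := Finset.mem_filter.mp htM
    exact hbest t htS ht hth fun hts_eq => hts (Subtype.ext hts_eq)
  have ho : o = f ⟨s, hsM⟩ :=
    le_antisymm (Finset.sup_le fun t _ => by
        by_cases hts : t = ⟨s, hsM⟩
        · rw [hts]
        · exact (hlt t hts).le)
      (Finset.le_sup (Finset.mem_attach _ _))
  have hstar : Mstar = {⟨s, hsM⟩} := by
    ext t
    simp only [Mstar, Finset.mem_filter, Finset.mem_attach, true_and, Finset.mem_singleton, ho]
    exact ⟨fun hft => by_contra fun hts => (hlt t hts).ne hft, fun hts => hts ▸ rfl⟩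
  have hg : Mstar.sup g = g ⟨s, hsM⟩ ∧ Mstar.inf' hMs g = g ⟨s, hsM⟩ := by
    simp only [hstar, Finset.sup_singleton, Finset.inf'_singleton, and_self]
  rw [hg.1, hg.2, ho, ite_self]
  rfl

theorem outc_eq_zero_of_no_move {S : Finset ℕ} {h : ℕ} {X : TB} (hS : ∀ s ∈ S, 0 < s → h < s) :
    outc S h X = (0, 0) := by
  have hM : ¬(S.filter fun s => 0 < s ∧ s ≤ h).Nonempty := fun ⟨s, hs⟩ => by
    obtain ⟨hsS, hs0, hsh⟩ := Finset.mem_filter.mp hs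
    exact absurd (hS s hsS hs0) (Nat.not_lt.mpr hsh)
  rw [outc, dif_neg hM]

namespace TwoThree

theorem outc_of_lt_two {h : ℕ} (hh : h < 2) (X : TB) : outc {2, 3} h X = (0, 0) :=
  outc_eq_zero_of_no_move (by simp only [Finset.mem_insert, Finset.mem_singleton]; omega)

theorem outc_two (X : TB) : outc {2, 3} 2 X = (2, 0) := by
  rw [outc_eq_of_best_move (s := 2) (by simp) two_pos le_rfl (by simp)]
  simp [o1, o2, outc_of_lt_two]

theorem outc_three (X : TB) : outc {2, 3} 3 X = (3, 0) := by
  rw [outc_eq_of_best_move (s := 3) (by simp) three_pos le_rfl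
    (by simp [o2, outc_of_lt_two])]
  simp [o1, o2, outc_of_lt_two]

theorem outc_four (X : TB) : outc {2, 3} 4 X = (3, 0) := by
  rw [outc_eq_of_best_move (s := 3) (by simp) three_pos (by norm_num)
    (by simp [o2, outc_of_lt_two, outc_two])]
  simp [o1, o2, outc_of_lt_two]

theorem outc_five (X : TB) : outc {2, 3} 5 X = (3, 2) := by
  rw [outc_eq_of_best_move (s := 3) (by simp) three_pos (by norm_num)
    (by simp [o2, outc_two, outc_three])]
  simp [o1, o2, outc_two]

theorem outc_seven (X : TB) : outc {2, 3} 7 X = (4, 3) := by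
  rw [outc_eq_of_best_move (s := 2) (by simp) two_pos (by norm_num)
    (by simp [o2, outc_four, outc_five])]
  simp [o1, o2, outc_five]

end TwoThree

theorem stmt12 (X : TB) :
    4 ≤ o1 {2, 3} X 7 ∧ 3 + o2 {2, 3} X.dual 4 = 3 := by
  simp [o1, o2, TwoThree.outc_seven, TwoThree.outc_four]
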